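/- Let x = Σ_{l=1}^K x_l with x̂_l(η) = B_l(η)e^{-i2πθ_l(η)}, |B_l'| ≤ ε₁, |θ_l'''| ≤ ε₂, and let C(g), I_m, M(η) be as usual. Suppose estimated ridges τ̌_l(η), γ̌_l(η) are given, set a_{k,l} = C(g)(τ̌_l(η)-τ̌_k(η), γ̌_l(η)-γ̌_k(η)). Then for each k, |D_x^g(τ̌_k(η), η, γ̌_k(η)) - Σ_{l=1}^K a_{k,l} x̂_l(η)| ≤ Ω₀(η), where Ω₀(η) = ε₁K I₁ + (π/3)ε₂M(η)I₃ + Σ_{l=1}^K B_l(η)(2π|τ̌_l(η)-θ_l'(η)|I₁ + π|γ̌_l(η)-θ_l''(η)|I₂). -/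

import Mathlib

open Real MeasureTheory

noncomputable def cexp (x : ℝ) : ℂ := Complex.exp (Complex.I * (x : ℂ))

/-- Frequency-domain chirplet transform with window `g`, applied to `xhat`. -/
noncomputable def fct (xhat g : ℝ → ℂ) (t η γ : ℝ) : ℂ :=
  ∫ ξ : ℝ, xhat (ξ + η) * g ξ * cexp (2 * π * ξ * t) * cexp (π * γ * ξ ^ 2)

/-- `C(h)(t,γ) = ∫ h(ξ) e^{-i2πξt} e^{-iπγξ²} dξ`. -/
noncomputable def Cg (h : ℝ → ℂ) (t γ : ℝ) : ℂ :=
  ∫ ξ : ℝ, h ξ * cexp (-(2 * π * ξ * t)) * cexp (-(π * γ * ξ ^ 2))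

/-- `I_m = ∫ |ξ^m g(ξ)| dξ`. -/
noncomputable def Imom (g : ℝ → ℂ) (m : ℕ) : ℝ := ∫ ξ : ℝ, ‖(ξ : ℂ) ^ m * g ξ‖

lemma cexp_add (a b : ℝ) : cexp (a + b) = cexp a * cexp b := by
  simp only [cexp, Complex.ofReal_add, mul_add, Complex.exp_add]

lemma norm_cexp (a : ℝ) : ‖cexp a‖ = 1 := by
  simp [cexp, Complex.norm_exp]

lemma continuous_cexp : Continuous cexp :=
  Complex.continuous_exp.comp (continuous_const.mul Complex.continuous_ofReal)

lemma hasDerivAt_cexp (x : ℝ) : HasDerivAt cexp (Complex.I * cexp x) x := by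
  have h1 : HasDerivAt (fun z : ℂ => Complex.exp (Complex.I * z))
      (Complex.exp (Complex.I * (x : ℂ)) * (Complex.I * 1)) (x : ℂ) :=
    (Complex.hasDerivAt_exp _).comp _ ((hasDerivAt_id ((x : ℝ) : ℂ)).const_mul Complex.I)
  have h2 := h1.comp_ofReal
  have h3 := h2.congr_deriv (show _ = Complex.I * cexp x by simp [cexp, mul_comm])
  exact h3

lemma norm_cexp_sub (a b : ℝ) : ‖cexp a - cexp b‖ ≤ |a - b| := by
  have h := Convex.norm_image_sub_le_of_norm_deriv_le (f := cexp) (C := 1)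
    (fun x _ => (hasDerivAt_cexp x).differentiableAt)
    (fun x _ => by rw [(hasDerivAt_cexp x).deriv]; simpa [norm_cexp] using le_of_eq (norm_cexp x)) convex_univ
    (Set.mem_univ b) (Set.mem_univ a)
  simpa [Real.norm_eq_abs] using h

lemma itDW_eq {f : ℝ → ℝ} {s : Set ℝ} (hs : UniqueDiffOn ℝ s) {n N : ℕ}
    (hf : ContDiff ℝ (N : ℕ∞) f) (hn : n ≤ N) :
    ∀ x ∈ s, iteratedDerivWithin n f s x = iteratedDeriv n f x := by
  induction n with
  | zero => intro x hx; simp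
  | succ m ih =>
    intro x hx
    have hm : m ≤ N := (Nat.le_succ m).trans hn
    rw [iteratedDerivWithin_succ, iteratedDeriv_succ]
    rw [derivWithin_congr (fun y hy => ih hm y hy) (ih hm x hx)]
    exact ((hf.differentiable_iteratedDeriv m (by exact_mod_cast hn)) x).derivWithin
      (hs.uniqueDiffWithinAt hx)

lemma taylor2_le {f : ℝ → ℝ} (hf : ContDiff ℝ 3 f) {ε : ℝ}
    (hε : ∀ u, |iteratedDeriv 3 f u| ≤ ε) {a x : ℝ} (hax : a ≤ x) :
    |f x - f a - deriv f a * (x - a) - iteratedDeriv 2 f a * (x - a) ^ 2 / 2|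
      ≤ ε * |x - a| ^ 3 / 6 := by
  rcases eq_or_lt_of_le hax with rfl | h
  · simp
  · have hs := uniqueDiffOn_Icc h
    have hf3 : ContDiffOn ℝ ((3 : ℕ) : ℕ∞) f (Set.Icc a x) := hf.contDiffOn
    have hdiff : DifferentiableOn ℝ (iteratedDerivWithin 2 f (Set.Icc a x)) (Set.Ioo a x) := by
      refine ((hf.differentiable_iteratedDeriv 2 (by norm_num)).differentiableOn).congr
        (fun y hy => itDW_eq hs hf (by norm_num) y (Set.Ioo_subset_Icc_self hy))
    obtain ⟨x', hx', hrem⟩ := taylor_mean_remainder_lagrange (n := 2) h.ne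
      (by rw [Set.uIcc_of_le hax]; exact hf3.of_le (by norm_num))
      (by rw [Set.uIcc_of_le hax, Set.uIoo_of_le hax]; exact hdiff)
    rw [Set.uIcc_of_le hax] at hrem
    rw [Set.uIoo_of_le hax] at hx'
    rw [taylor_within_apply] at hrem
    have e0 := itDW_eq hs hf (by norm_num : 0 ≤ 3) a (Set.left_mem_Icc.2 hax)
    have e1 := itDW_eq hs hf (by norm_num : 1 ≤ 3) a (Set.left_mem_Icc.2 hax)
    have e2 := itDW_eq hs hf (by norm_num : 2 ≤ 3) a (Set.left_mem_Icc.2 hax)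
    have e3 := itDW_eq hs hf (le_refl 3) x' (Set.Ioo_subset_Icc_self hx')
    rw [Finset.sum_range_succ, Finset.sum_range_succ, Finset.sum_range_one] at hrem
    rw [e0, e1, e2, e3] at hrem
    simp only [iteratedDeriv_zero, iteratedDeriv_one, pow_zero, pow_one, smul_eq_mul] at hrem
    have hxa : |x - a| = x - a := abs_of_pos (by linarith)
    have hb := hε x'
    have key : f x - f a - deriv f a * (x - a) - iteratedDeriv 2 f a * (x - a) ^ 2 / 2
        = iteratedDeriv 3 f x' * (x - a) ^ 3 / 6 := by
      norm_num [Nat.factorial] at hrem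
      linarith
    have hp : (0:ℝ) ≤ (x - a) ^ 3 := pow_nonneg (by linarith) 3
    rw [key, hxa]
    rw [abs_div, abs_mul, abs_pow, hxa, abs_of_pos (by norm_num : (0:ℝ) < 6)]
    nlinarith [mul_le_mul_of_nonneg_right hb hp]

lemma iteratedDeriv_reflect (f : ℝ → ℝ) (a : ℝ) (n : ℕ) :
    iteratedDeriv n (fun t => f (2 * a - t)) = fun t => (-1 : ℝ) ^ n * iteratedDeriv n f (2 * a - t) := by
  funext t
  have h1 : (fun t : ℝ => f (2 * a - t)) = fun z : ℝ => f (-(z + -(2 * a))) := by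
    funext z; ring_nf
  have h2 := congrFun (iteratedDeriv_comp_add_const n (fun u : ℝ => f (-u)) (-(2 * a))) t
  have h3 := iteratedDeriv_comp_neg n f (t + -(2 * a))
  rw [h1]
  rw [show (fun z : ℝ => f (-(z + -(2 * a)))) = (fun z : ℝ => (fun u : ℝ => f (-u)) (z + -(2 * a))) from rfl]
  rw [h2, h3]
  simp only [smul_eq_mul]
  ring_nf

lemma taylor2 {f : ℝ → ℝ} (hf : ContDiff ℝ 3 f) {ε : ℝ}
    (hε : ∀ u, |iteratedDeriv 3 f u| ≤ ε) (a x : ℝ) :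
    |f x - f a - deriv f a * (x - a) - iteratedDeriv 2 f a * (x - a) ^ 2 / 2|
      ≤ ε * |x - a| ^ 3 / 6 := by
  rcases le_total a x with h | h
  · exact taylor2_le hf hε h
  · set F : ℝ → ℝ := fun t => f (2 * a - t) with hF
    have hFc : ContDiff ℝ 3 F := hf.comp ((contDiff_const).sub contDiff_id)
    have hF3 : ∀ u, |iteratedDeriv 3 F u| ≤ ε := by
      intro u
      rw [iteratedDeriv_reflect f a 3]
      simpa [abs_mul] using hε (2 * a - u)
    have hax : a ≤ 2 * a - x := by linarith
    have key := taylor2_le hFc hF3 hax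
    have eF : F (2 * a - x) = f x := by simp [hF]
    have eFa : F a = f a := by simp [hF]; ring_nf
    have ed1 : deriv F a = - deriv f a := by
      have := iteratedDeriv_reflect f a 1
      rw [iteratedDeriv_one, iteratedDeriv_one] at this
      rw [this]; simp; ring_nf
    have ed2 : iteratedDeriv 2 F a = iteratedDeriv 2 f a := by
      have := iteratedDeriv_reflect f a 2
      rw [this]; simp; ring_nf
    rw [eF, eFa, ed1, ed2] at key
    have e1 : (2 * a - x - a) = -(x - a) := by ring
    rw [e1] at key
    have e2 : |(-(x - a))| = |x - a| := abs_neg _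
    rw [e2] at key
    calc |f x - f a - deriv f a * (x - a) - iteratedDeriv 2 f a * (x - a) ^ 2 / 2|
        = |f x - f a - (- deriv f a) * (-(x - a)) - iteratedDeriv 2 f a * (-(x - a)) ^ 2 / 2| := by
          ring_nf
      _ ≤ ε * |x - a| ^ 3 / 6 := key

lemma step_bound (b₁ b₂ a₁ a₂ c : ℝ) :
    ‖(b₁ : ℂ) * cexp a₁ - (b₂ : ℂ) * cexp a₂‖
      ≤ |b₁ - b₂| + |b₂| * |a₁ - c| + |b₂| * |c - a₂| := by
  have h1 : (b₁ : ℂ) * cexp a₁ - (b₂ : ℂ) * cexp a₂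
      = ((b₁ : ℂ) - b₂) * cexp a₁ + ((b₂ : ℂ) * (cexp a₁ - cexp c)
        + (b₂ : ℂ) * (cexp c - cexp a₂)) := by ring
  rw [h1]
  refine (norm_add_le _ _).trans ?_
  have e1 : ‖((b₁ : ℂ) - b₂) * cexp a₁‖ = |b₁ - b₂| := by
    rw [norm_mul, norm_cexp, mul_one, ← Complex.ofReal_sub, Complex.norm_real,
      Real.norm_eq_abs]
  have e2 : ‖(b₂ : ℂ) * (cexp a₁ - cexp c)‖ ≤ |b₂| * |a₁ - c| := by
    rw [norm_mul, Complex.norm_real, Real.norm_eq_abs]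
    exact mul_le_mul_of_nonneg_left (norm_cexp_sub _ _) (abs_nonneg _)
  have e3 : ‖(b₂ : ℂ) * (cexp c - cexp a₂)‖ ≤ |b₂| * |c - a₂| := by
    rw [norm_mul, Complex.norm_real, Real.norm_eq_abs]
    exact mul_le_mul_of_nonneg_left (norm_cexp_sub _ _) (abs_nonneg _)
  have := norm_add_le ((b₂ : ℂ) * (cexp a₁ - cexp c)) ((b₂ : ℂ) * (cexp c - cexp a₂))
  rw [e1]
  linarith

lemma cexp_merge (X : ℂ) (p q r : ℝ) :
    X * cexp p * cexp q * cexp r = X * cexp (p + q + r) := by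
  rw [cexp_add, cexp_add]; ring

lemma key_pointwise (Bl θl : ℝ → ℝ) (ε₁ ε₂ : ℝ)
    (hB : ContDiff ℝ 1 Bl) (hB1 : ∀ u, |deriv Bl u| ≤ ε₁)
    (hBpos : ∀ u, 0 < Bl u)
    (hθ : ContDiff ℝ 3 θl) (hθ3 : ∀ u, |iteratedDeriv 3 θl u| ≤ ε₂)
    (η tk gk tl gl ξ : ℝ) :
    ‖(Bl (ξ + η) : ℂ) * cexp (-(2 * π * θl (ξ + η))) * cexp (2 * π * ξ * tk)
        * cexp (π * gk * ξ ^ 2)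
      - (Bl η : ℂ) * cexp (-(2 * π * θl η)) * cexp (-(2 * π * ξ * (tl - tk)))
        * cexp (-(π * (gl - gk) * ξ ^ 2))‖
      ≤ ε₁ * |ξ| + π / 3 * ε₂ * Bl η * |ξ| ^ 3
        + Bl η * (2 * π * |tl - deriv θl η| * |ξ| + π * |gl - iteratedDeriv 2 θl η| * ξ ^ 2) := by
  set p₁ : ℝ := -(2 * π * θl (ξ + η)) + 2 * π * ξ * tk + π * gk * ξ ^ 2 with hp₁
  set p₂ : ℝ := -(2 * π * θl η) + -(2 * π * ξ * (tl - tk)) + -(π * (gl - gk) * ξ ^ 2) with hp₂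
  set c : ℝ := -(2 * π * (θl η + deriv θl η * ξ + iteratedDeriv 2 θl η * ξ ^ 2 / 2))
      + 2 * π * ξ * tk + π * gk * ξ ^ 2 with hc
  rw [cexp_merge, cexp_merge]
  refine (step_bound _ _ _ _ c).trans ?_
  -- amplitude part
  have hlip : |Bl (ξ + η) - Bl η| ≤ ε₁ * |ξ| := by
    have := Convex.norm_image_sub_le_of_norm_deriv_le (f := Bl) (C := ε₁)
      (fun u _ => (hB.differentiable one_ne_zero) u)
      (fun u _ => by simpa [Real.norm_eq_abs] using hB1 u) convex_univ
      (Set.mem_univ η) (Set.mem_univ (ξ + η))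
    simpa [Real.norm_eq_abs] using this
  -- Taylor phase part
  have htay : |p₁ - c| ≤ 2 * π * (ε₂ * |ξ| ^ 3 / 6) := by
    have h := taylor2 hθ hθ3 η (ξ + η)
    rw [add_sub_cancel_right] at h
    have e : p₁ - c = -(2 * π) * (θl (ξ + η) - θl η - deriv θl η * ξ
        - iteratedDeriv 2 θl η * ξ ^ 2 / 2) := by rw [hp₁, hc]; ring
    rw [e, abs_mul, abs_neg, abs_of_pos (by positivity : (0:ℝ) < 2 * π)]
    exact mul_le_mul_of_nonneg_left h (by positivity)
  -- linear phase part
  have hlin : |c - p₂| ≤ 2 * π * |tl - deriv θl η| * |ξ| + π * |gl - iteratedDeriv 2 θl η| * ξ ^ 2 := by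
    have e : c - p₂ = 2 * π * (ξ * (tl - deriv θl η)) + π * (ξ ^ 2 * (gl - iteratedDeriv 2 θl η)) := by
      rw [hc, hp₂]; ring
    rw [e]
    refine (abs_add_le _ _).trans ?_
    have e1 : |2 * π * (ξ * (tl - deriv θl η))| = 2 * π * |tl - deriv θl η| * |ξ| := by
      rw [abs_mul, abs_mul, abs_mul, abs_of_pos Real.pi_pos, abs_two]; ring
    have e2 : |π * (ξ ^ 2 * (gl - iteratedDeriv 2 θl η))| = π * |gl - iteratedDeriv 2 θl η| * ξ ^ 2 := by
      rw [abs_mul, abs_mul, abs_of_pos Real.pi_pos, abs_pow, sq_abs]; ring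
    rw [e1, e2]
  have hBabs : |Bl η| = Bl η := abs_of_pos (hBpos η)
  rw [hBabs]
  have h2 := mul_le_mul_of_nonneg_left htay (le_of_lt (hBpos η))
  have h3 := mul_le_mul_of_nonneg_left hlin (le_of_lt (hBpos η))
  nlinarith [Real.pi_pos]

/-- FGSSO data error: `|D_x^g(τ̌_k, η, γ̌_k) - Σ_l a_{k,l} x̂_l(η)| ≤ Ω₀(η)`. -/
theorem fgsso_data_error (K : ℕ) (g : ℝ → ℂ) (B θ : Fin K → ℝ → ℝ) (ε₁ ε₂ : ℝ)
    (hB : ∀ l, ContDiff ℝ 1 (B l)) (hB1 : ∀ l, ∀ u : ℝ, |deriv (B l) u| ≤ ε₁)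
    (hBpos : ∀ l, ∀ u : ℝ, 0 < B l u)
    (hθ : ∀ l, ContDiff ℝ 3 (θ l)) (hθ3 : ∀ l, ∀ u : ℝ, |iteratedDeriv 3 (θ l) u| ≤ ε₂)
    (hint : ∀ m : ℕ, m ≤ 3 → Integrable (fun ξ : ℝ => (ξ : ℂ) ^ m * g ξ))
    (η : ℝ) (τ γ : Fin K → ℝ) :
    ∀ k : Fin K,
      ‖fct (fun u => ∑ l : Fin K, (B l u : ℂ) * cexp (-(2 * π * θ l u))) g (τ k) η (γ k)
          - ∑ l : Fin K, Cg g (τ l - τ k) (γ l - γ k)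
              * ((B l η : ℂ) * cexp (-(2 * π * θ l η)))‖
        ≤ ε₁ * K * Imom g 1 + π / 3 * ε₂ * (∑ l : Fin K, B l η) * Imom g 3
          + ∑ l : Fin K, B l η * (2 * π * |τ l - deriv (θ l) η| * Imom g 1
              + π * |γ l - iteratedDeriv 2 (θ l) η| * Imom g 2) := by
  intro k
  classical
  -- integrands
  set f : Fin K → ℝ → ℂ := fun l ξ =>
    (B l (ξ + η) : ℂ) * cexp (-(2 * π * θ l (ξ + η))) * g ξ * cexp (2 * π * ξ * τ k)
      * cexp (π * γ k * ξ ^ 2) with hf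
  set h : Fin K → ℝ → ℂ := fun l ξ =>
    (B l η : ℂ) * cexp (-(2 * π * θ l η)) * (g ξ * cexp (-(2 * π * ξ * (τ l - τ k)))
      * cexp (-(π * (γ l - γ k) * ξ ^ 2))) with hh
  -- basic integrability
  have hg0 : Integrable g := by
    have := hint 0 (by norm_num); simpa using this
  have hgn : ∀ m : ℕ, m ≤ 3 → Integrable (fun ξ : ℝ => ‖(ξ : ℂ) ^ m * g ξ‖) :=
    fun m hm => (hint m hm).norm
  have em : ∀ (m : ℕ) (ξ : ℝ), ‖(ξ : ℂ) ^ m * g ξ‖ = |ξ| ^ m * ‖g ξ‖ := by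
    intro m ξ
    rw [norm_mul, norm_pow, Complex.norm_real, Real.norm_eq_abs]
  -- continuity helpers
  have cBl : ∀ l, Continuous fun ξ : ℝ => ((B l (ξ + η) : ℝ) : ℂ) := fun l =>
    Complex.continuous_ofReal.comp ((hB l).continuous.comp (continuous_id.add continuous_const))
  have cth : ∀ l, Continuous fun ξ : ℝ => cexp (-(2 * π * θ l (ξ + η))) := fun l =>
    continuous_cexp.comp
      ((continuous_const.mul ((hθ l).continuous.comp (continuous_id.add continuous_const))).neg)
  have c2 : Continuous fun ξ : ℝ => cexp (2 * π * ξ * τ k) :=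
    continuous_cexp.comp (by fun_prop)
  have c3 : Continuous fun ξ : ℝ => cexp (π * γ k * ξ ^ 2) :=
    continuous_cexp.comp (by fun_prop)
  have c2' : ∀ l, Continuous fun ξ : ℝ => cexp (-(2 * π * ξ * (τ l - τ k))) := fun l =>
    continuous_cexp.comp (by fun_prop)
  have c3' : ∀ l, Continuous fun ξ : ℝ => cexp (-(π * (γ l - γ k) * ξ ^ 2)) := fun l =>
    continuous_cexp.comp (by fun_prop)
  -- Lipschitz bound for B
  have hlip : ∀ l (ξ : ℝ), |B l (ξ + η) - B l η| ≤ ε₁ * |ξ| := by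
    intro l ξ
    have := Convex.norm_image_sub_le_of_norm_deriv_le (f := B l) (C := ε₁)
      (fun u _ => ((hB l).differentiable one_ne_zero) u)
      (fun u _ => by simpa [Real.norm_eq_abs] using hB1 l u) convex_univ
      (Set.mem_univ η) (Set.mem_univ (ξ + η))
    simpa [Real.norm_eq_abs] using this
  -- integrability of f l
  have hf_int : ∀ l, Integrable (f l) := by
    intro l
    have hε₁ : 0 ≤ ε₁ := le_trans (abs_nonneg _) (hB1 l 0)
    refine Integrable.mono' ((hg0.norm.const_mul (B l η)).add
      ((hgn 1 (by norm_num)).const_mul ε₁)) ?_ ?_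
    · exact ((((cBl l).mul (cth l)).aestronglyMeasurable.mul hg0.1).mul
        c2.aestronglyMeasurable).mul c3.aestronglyMeasurable
    · filter_upwards with ξ
      have : ‖f l ξ‖ = B l (ξ + η) * ‖g ξ‖ := by
        rw [hf]
        simp only [norm_mul, norm_cexp, Complex.norm_real, Real.norm_eq_abs,
          abs_of_pos (hBpos l (ξ + η)), mul_one]
      rw [this]
      have h1 : B l (ξ + η) ≤ B l η + ε₁ * |ξ| := by
        have := hlip l ξ
        have := abs_le.mp this
        linarith [this.2]
      have := mul_le_mul_of_nonneg_right h1 (norm_nonneg (g ξ))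
      calc B l (ξ + η) * ‖g ξ‖ ≤ (B l η + ε₁ * |ξ|) * ‖g ξ‖ := this
        _ = B l η * ‖g ξ‖ + ε₁ * ‖(ξ : ℂ) ^ 1 * g ξ‖ := by rw [em 1 ξ]; ring
  -- integrability of h l
  have hh_int : ∀ l, Integrable (h l) := by
    intro l
    refine Integrable.mono' (hg0.norm.const_mul (B l η)) ?_ ?_
    · exact (continuous_const.aestronglyMeasurable.mul
        ((hg0.1.mul (c2' l).aestronglyMeasurable).mul (c3' l).aestronglyMeasurable))
    · filter_upwards with ξ
      have : ‖h l ξ‖ = B l η * ‖g ξ‖ := by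
        rw [hh]
        simp only [norm_mul, norm_cexp, Complex.norm_real, Real.norm_eq_abs,
          abs_of_pos (hBpos l η), mul_one, one_mul]
      rw [this]
  -- step A : fct of the sum
  have hA : fct (fun u => ∑ l : Fin K, (B l u : ℂ) * cexp (-(2 * π * θ l u))) g (τ k) η (γ k)
      = ∑ l : Fin K, ∫ ξ : ℝ, f l ξ := by
    rw [fct, ← integral_finset_sum _ (fun l _ => hf_int l)]
    congr 1; funext ξ
    rw [Finset.sum_mul, Finset.sum_mul, Finset.sum_mul]
  -- step B : Cg * amplitude
  have hBc : ∀ l : Fin K, Cg g (τ l - τ k) (γ l - γ k)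
      * ((B l η : ℂ) * cexp (-(2 * π * θ l η))) = ∫ ξ : ℝ, h l ξ := by
    intro l
    rw [Cg, mul_comm, ← integral_const_mul]
  -- the dominating function
  set φ : Fin K → ℝ → ℝ := fun l ξ =>
    ε₁ * ‖(ξ : ℂ) ^ 1 * g ξ‖ + ((π / 3 * ε₂ * B l η) * ‖(ξ : ℂ) ^ 3 * g ξ‖
      + ((B l η * (2 * π * |τ l - deriv (θ l) η|)) * ‖(ξ : ℂ) ^ 1 * g ξ‖
        + (B l η * (π * |γ l - iteratedDeriv 2 (θ l) η|)) * ‖(ξ : ℂ) ^ 2 * g ξ‖)) with hφ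
  have i1 : Integrable (fun ξ : ℝ => ε₁ * ‖(ξ : ℂ) ^ 1 * g ξ‖) :=
    (hgn 1 (by norm_num)).const_mul _
  have i3 : ∀ l, Integrable (fun ξ : ℝ => (π / 3 * ε₂ * B l η) * ‖(ξ : ℂ) ^ 3 * g ξ‖) :=
    fun l => (hgn 3 (by norm_num)).const_mul _
  have i1' : ∀ l, Integrable (fun ξ : ℝ =>
      (B l η * (2 * π * |τ l - deriv (θ l) η|)) * ‖(ξ : ℂ) ^ 1 * g ξ‖) :=
    fun l => (hgn 1 (by norm_num)).const_mul _
  have i2 : ∀ l, Integrable (fun ξ : ℝ =>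
      (B l η * (π * |γ l - iteratedDeriv 2 (θ l) η|)) * ‖(ξ : ℂ) ^ 2 * g ξ‖) :=
    fun l => (hgn 2 (by norm_num)).const_mul _
  have hφ_int : ∀ l, Integrable (φ l) := fun l =>
    i1.add ((i3 l).add ((i1' l).add (i2 l)))

  -- pointwise bound
  have hpt : ∀ l (ξ : ℝ), ‖f l ξ - h l ξ‖ ≤ φ l ξ := by
    intro l ξ
    have hfactor : f l ξ - h l ξ =
        ((B l (ξ + η) : ℂ) * cexp (-(2 * π * θ l (ξ + η))) * cexp (2 * π * ξ * τ k)
            * cexp (π * γ k * ξ ^ 2)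
          - (B l η : ℂ) * cexp (-(2 * π * θ l η)) * cexp (-(2 * π * ξ * (τ l - τ k)))
            * cexp (-(π * (γ l - γ k) * ξ ^ 2))) * g ξ := by
      rw [hf, hh]; ring
    rw [hfactor, norm_mul]
    have hkey := key_pointwise (B l) (θ l) ε₁ ε₂ (hB l) (hB1 l) (hBpos l) (hθ l) (hθ3 l)
      η (τ k) (γ k) (τ l) (γ l) ξ
    refine (mul_le_mul_of_nonneg_right hkey (norm_nonneg (g ξ))).trans (le_of_eq ?_)
    rw [hφ]
    simp only [em 1 ξ, em 2 ξ, em 3 ξ]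
    rw [show |ξ| ^ 2 = ξ ^ 2 from sq_abs ξ]
    ring
  -- integral of φ
  have hφ_val : ∀ l, (∫ ξ : ℝ, φ l ξ) = ε₁ * Imom g 1 + π / 3 * ε₂ * B l η * Imom g 3
      + B l η * (2 * π * |τ l - deriv (θ l) η| * Imom g 1
        + π * |γ l - iteratedDeriv 2 (θ l) η| * Imom g 2) := by
    intro l
    rw [hφ]
    have j2 : Integrable (fun ξ : ℝ =>
        (B l η * (2 * π * |τ l - deriv (θ l) η|)) * ‖(ξ : ℂ) ^ 1 * g ξ‖
          + (B l η * (π * |γ l - iteratedDeriv 2 (θ l) η|)) * ‖(ξ : ℂ) ^ 2 * g ξ‖) :=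
      (i1' l).add (i2 l)
    have j3 : Integrable (fun ξ : ℝ =>
        (π / 3 * ε₂ * B l η) * ‖(ξ : ℂ) ^ 3 * g ξ‖
          + ((B l η * (2 * π * |τ l - deriv (θ l) η|)) * ‖(ξ : ℂ) ^ 1 * g ξ‖
            + (B l η * (π * |γ l - iteratedDeriv 2 (θ l) η|)) * ‖(ξ : ℂ) ^ 2 * g ξ‖)) :=
      (i3 l).add j2
    rw [integral_add i1 j3, integral_add (i3 l) j2, integral_add (i1' l) (i2 l),
      integral_const_mul, integral_const_mul, integral_const_mul, integral_const_mul]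
    rw [show (∫ ξ : ℝ, ‖(ξ : ℂ) ^ 1 * g ξ‖) = Imom g 1 from rfl,
      show (∫ ξ : ℝ, ‖(ξ : ℂ) ^ 2 * g ξ‖) = Imom g 2 from rfl,
      show (∫ ξ : ℝ, ‖(ξ : ℂ) ^ 3 * g ξ‖) = Imom g 3 from rfl]
    ring
  -- main chain
  rw [hA]
  calc ‖(∑ l : Fin K, ∫ ξ : ℝ, f l ξ) - ∑ l : Fin K, Cg g (τ l - τ k) (γ l - γ k)
        * ((B l η : ℂ) * cexp (-(2 * π * θ l η)))‖
      = ‖∑ l : Fin K, ∫ ξ : ℝ, (f l ξ - h l ξ)‖ := by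
        rw [← Finset.sum_sub_distrib]
        congr 1
        refine Finset.sum_congr rfl fun l _ => ?_
        rw [hBc l, ← integral_sub (hf_int l) (hh_int l)]
    _ ≤ ∑ l : Fin K, ‖∫ ξ : ℝ, (f l ξ - h l ξ)‖ := norm_sum_le _ _
    _ ≤ ∑ l : Fin K, ∫ ξ : ℝ, φ l ξ := by
        refine Finset.sum_le_sum fun l _ => ?_
        exact norm_integral_le_of_norm_le (hφ_int l) (Filter.Eventually.of_forall (hpt l))
    _ = ∑ l : Fin K, (ε₁ * Imom g 1 + π / 3 * ε₂ * B l η * Imom g 3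
          + B l η * (2 * π * |τ l - deriv (θ l) η| * Imom g 1
            + π * |γ l - iteratedDeriv 2 (θ l) η| * Imom g 2)) :=
        Finset.sum_congr rfl fun l _ => hφ_val l
    _ = ε₁ * K * Imom g 1 + π / 3 * ε₂ * (∑ l : Fin K, B l η) * Imom g 3
          + ∑ l : Fin K, B l η * (2 * π * |τ l - deriv (θ l) η| * Imom g 1
              + π * |γ l - iteratedDeriv 2 (θ l) η| * Imom g 2) := by
        rw [Finset.sum_add_distrib, Finset.sum_add_distrib, Finset.sum_const,
          Finset.card_univ, Fintype.card_fin, nsmul_eq_mul, ← Finset.sum_mul,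
          ← Finset.mul_sum]
        ring
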